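/- arXiv:1404.5554 — 2 statements merged into one kernel-verified Lean document; each statement's English description precedes it below -/
import Mathlib

section
/- Let u > 0, let M = 4 and let P be the cyclic permutation matrix with rows (0,1,0,0), (0,0,1,0), (0,0,0,1), (1,0,0,0), whose stationary distribution is ϖ = (1/4, 1/4, 1/4, 1/4). Let (Z_n)_{n≥1} be a stationary Markov chain with transition matrix P and Z_1 ~ ϖ, and let (B_n) be conditionally independent given the chain, with B_n exponentially distributed with rate μ_{Z_n}, where (μ_1, μ_2, μ_3, μ_4) = (u/2, 10u, u/2, 10u). Then for every n ≥ 1 the autocorrelation satisfies ρ[B_1, B_{1+n}] = Cov(B_1, B_{1+n})/Var(B_1) = (−1)^n · 361/1163, independently of u. -/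
/-!
Given `Z₁ = i`, the cyclic chain is almost surely deterministic, `Z_{1+k} = i + k`, and the
joint distribution functions of `B₁, …, B_{1+n}` on that path event are products of exponential
ones; so conditionally on `Z₁ = i` the times are independent with `B_{1+k} ~ Exp(μ_{i+k})`.
Averaging over the uniform `Z₁` gives `E[B₁ B_{1+n}] = ¼ ∑ᵢ μᵢ⁻¹ μ_{i+n}⁻¹` and the analogous
formulas for the other moments. The rates alternate with period two, so only the parity of `n`
matters: the covariance is `±361/(400u²)` and the variance `1163/(400u²)`.
-/
open MeasureTheory ProbabilityTheory Set
open scoped ENNReal Nat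

namespace ProbabilityTheory

lemma expMeasure_Iic {r : ℝ} (hr : 0 < r) (x : ℝ) :
    expMeasure r (Iic x) = ENNReal.ofReal (1 - Real.exp (-r * x)) := by
  have := isProbabilityMeasure_expMeasure hr
  rw [← ofReal_cdf, cdf_expMeasure_eq hr, neg_mul]
  split_ifs with hx
  · rfl
  · rw [ENNReal.ofReal_zero, eq_comm, ENNReal.ofReal_eq_zero, sub_nonpos, Real.one_le_exp_iff]
    nlinarith

lemma toReal_exponentialPDF {r : ℝ} (hr : 0 < r) (x : ℝ) :
    (exponentialPDF r x).toReal = (Ici 0).indicator (fun x => r * Real.exp (-(r * x))) x := by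
  by_cases hx : 0 ≤ x
  · rw [exponentialPDF_of_nonneg hx, indicator_of_mem (mem_Ici.2 hx),
      ENNReal.toReal_ofReal (by positivity)]
  · rw [exponentialPDF_of_neg (not_le.1 hx), indicator_of_notMem (fun h => hx (mem_Ici.1 h)),
      ENNReal.toReal_zero]

lemma expMeasure_eq_withDensity (r : ℝ) : expMeasure r = volume.withDensity (exponentialPDF r) :=
  rfl

lemma integral_expMeasure_eq_integral_Ioi {r : ℝ} (hr : 0 < r) (g : ℝ → ℝ) :
    ∫ x, g x ∂expMeasure r = ∫ x in Ioi 0, r * Real.exp (-(r * x)) * g x := by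
  rw [expMeasure_eq_withDensity,
    integral_withDensity_eq_integral_toReal_smul (f := exponentialPDF r)
      (measurable_exponentialPDFReal r).ennreal_ofReal (ae_of_all _ fun _ => ENNReal.ofReal_lt_top)]
  simp_rw [toReal_exponentialPDF hr, smul_eq_mul, ← indicator_mul_left]
  rw [integral_indicator measurableSet_Ici, integral_Ici_eq_integral_Ioi]

lemma integrable_expMeasure_iff {r : ℝ} (hr : 0 < r) {g : ℝ → ℝ} :
    Integrable g (expMeasure r) ↔
      IntegrableOn (fun x => r * Real.exp (-(r * x)) * g x) (Ioi 0) := by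
  rw [expMeasure_eq_withDensity,
    integrable_withDensity_iff_integrable_smul' (f := exponentialPDF r)
      (measurable_exponentialPDFReal r).ennreal_ofReal (ae_of_all _ fun _ => ENNReal.ofReal_lt_top)]
  simp_rw [toReal_exponentialPDF hr, smul_eq_mul, ← indicator_mul_left]
  rw [integrable_indicator_iff measurableSet_Ici, integrableOn_Ici_iff_integrableOn_Ioi]

lemma integrable_pow_expMeasure {r : ℝ} (hr : 0 < r) (k : ℕ) :
    Integrable (fun x => x ^ k) (expMeasure r) := by
  rw [integrable_expMeasure_iff hr]
  have h := integrableOn_rpow_mul_exp_neg_mul_rpow (p := 1) (s := k)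
    (by linarith [k.cast_nonneg (α := ℝ)]) one_pos hr
  simp only [Real.rpow_one, Real.rpow_natCast] at h
  exact IntegrableOn.congr_fun (h.const_mul r) (fun x _ => by rw [neg_mul]; ring) measurableSet_Ioi

lemma integral_pow_expMeasure {r : ℝ} (hr : 0 < r) (k : ℕ) :
    ∫ x, x ^ k ∂expMeasure r = k ! / r ^ k := by
  have h := Real.integral_rpow_mul_exp_neg_mul_Ioi (a := k + 1) (by positivity) hr
  rw [add_sub_cancel_right, Real.Gamma_nat_eq_factorial, ← Nat.cast_add_one] at h
  simp_rw [Real.rpow_natCast] at h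
  rw [integral_expMeasure_eq_integral_Ioi hr]
  simp_rw [mul_assoc, mul_comm (Real.exp _)]
  rw [integral_const_mul, h, one_div, inv_pow, pow_succ]
  field_simp

lemma cond_congr_set {Ω : Type*} [MeasurableSpace Ω] {μ : Measure Ω} {s t : Set Ω}
    (h : s =ᵐ[μ] t) : μ[|s] = μ[|t] := by
  rw [cond, cond, measure_congr h, Measure.restrict_congr_set h]

end ProbabilityTheory

namespace MeasureTheory

lemma map_eq_pi_of_forall_Iic {ι Ω : Type*} [Fintype ι] [MeasurableSpace Ω] {P : Measure Ω}
    {X : Ω → ι → ℝ} (hX : Measurable X) {μ : ι → Measure ℝ} [∀ i, IsFiniteMeasure (μ i)]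
    (h : ∀ x : ι → ℝ, P {ω | ∀ k, X ω k ≤ x k} = ∏ k, μ k (Iic (x k))) :
    P.map X = Measure.pi μ := by
  let spanning (i : ι) : (μ i).FiniteSpanningSetsIn (range Iic) :=
    { set n := Iic (n : ℝ)
      set_mem _ := mem_range_self _
      finite _ := measure_lt_top _ _
      spanning := eq_univ_of_forall fun x => mem_iUnion.2 (exists_nat_ge x) }
  refine (Measure.pi_eq_generateFrom (C := fun _ => range Iic)
    (fun _ => (borel_eq_generateFrom_Iic ℝ).symm.trans BorelSpace.measurable_eq.symm)
    (fun _ => isPiSystem_Iic) spanning fun s hs => ?_).symm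
  choose x hx using hs
  have hpre : X ⁻¹' univ.pi s = {ω | ∀ k, X ω k ≤ x k} := by
    ext ω; simp [← hx]
  rw [Measure.map_apply hX (MeasurableSet.univ_pi fun k => hx k ▸ measurableSet_Iic), hpre, h]
  simp_rw [hx]

variable {ι α : Type*} [Fintype ι] [DecidableEq ι]

lemma prod_apply_eq_prod_univ_extend_by_one {M : Type*} [CommMonoid M] (s : Finset ι)
    (f : ι → α → M) (x : ι → α) : ∏ k ∈ s, f k (x k) = ∏ k, (if k ∈ s then f k else 1) (x k) := by
  simp_rw [ite_apply, Pi.one_apply, Fintype.prod_extend_by_one]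

variable [MeasurableSpace α] {ν : ι → Measure α}

lemma integrable_finset_prod_pi [∀ i, IsFiniteMeasure (ν i)] {s : Finset ι} {f : ι → α → ℝ}
    (hf : ∀ k ∈ s, Integrable (f k) (ν k)) :
    Integrable (fun x => ∏ k ∈ s, f k (x k)) (Measure.pi ν) := by
  simp_rw [prod_apply_eq_prod_univ_extend_by_one s f]
  refine Integrable.fintype_prod fun k => ?_
  split_ifs with hk
  exacts [hf k hk, integrable_const 1]

lemma integral_finset_prod_pi [∀ i, IsProbabilityMeasure (ν i)] (s : Finset ι) (f : ι → α → ℝ) :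
    ∫ x, ∏ k ∈ s, f k (x k) ∂Measure.pi ν = ∏ k ∈ s, ∫ t, f k t ∂ν k := by
  simp_rw [prod_apply_eq_prod_univ_extend_by_one s f, integral_fintype_prod_eq_prod,
    ← Fintype.prod_extend_by_one s]
  refine Finset.prod_congr rfl fun k _ => ?_
  split_ifs <;> simp

end MeasureTheory

section MarkovModulated

variable {Ω S : Type*}

def pathSet (Z : ℕ → Ω → S) {n : ℕ} (f : Fin n → S) : Set Ω :=
  {ω | ∀ k : Fin n, Z ((k : ℕ) + 1) ω = f k}

variable [MeasurableSpace Ω] [MeasurableSpace S]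

/-- `Z` is a Markov chain with initial law `ϖ` and transition matrix `p`, and conditionally on
its path the times `B` are independent with `B k ~ Exp(mu (Z k))`; time is indexed from `1`. -/
structure IsMarkovModulatedExp (Pr : Measure Ω) (ϖ : S → ℝ) (p : S → S → ℝ) (mu : S → ℝ)
    (Z : ℕ → Ω → S) (B : ℕ → Ω → ℝ) : Prop where
  measurable_state : ∀ n, Measurable (Z n)
  measurable_time : ∀ n, Measurable (B n)
  measure_pathSet : ∀ (n : ℕ) (f : Fin (n + 1) → S),
    Pr (pathSet Z f) = ENNReal.ofReal (ϖ (f 0) * ∏ k : Fin n, p (f k.castSucc) (f k.succ))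
  measure_pathSet_inter_Iic : ∀ (n : ℕ) (f : Fin n → S) (x : Fin n → ℝ),
    Pr {ω | ∀ k : Fin n, Z ((k : ℕ) + 1) ω = f k ∧ B ((k : ℕ) + 1) ω ≤ x k}
      = Pr (pathSet Z f) * ∏ k, ENNReal.ofReal (1 - Real.exp (-(mu (f k)) * x k))

namespace IsMarkovModulatedExp

variable {Pr : Measure Ω} {ϖ : S → ℝ} {p : S → S → ℝ} {mu : S → ℝ} {Z : ℕ → Ω → S}
  {B : ℕ → Ω → ℝ}

lemma measurableSet_pathSet (h : IsMarkovModulatedExp Pr ϖ p mu Z B) [MeasurableSingletonClass S]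
    {n : ℕ} (f : Fin n → S) : MeasurableSet (pathSet Z f) := by
  simp only [pathSet, ofPred_forall]
  exact MeasurableSet.iInter fun k => h.measurable_state _ (measurableSet_singleton _)

lemma measure_preimage_state_one (h : IsMarkovModulatedExp Pr ϖ p mu Z B) (i : S) :
    Pr (Z 1 ⁻¹' {i}) = ENNReal.ofReal (ϖ i) := by
  have hpath : pathSet Z (fun _ : Fin 1 => i) = Z 1 ⁻¹' {i} := by
    ext ω; simp [pathSet]
  simpa [hpath] using h.measure_pathSet 0 fun _ => i

lemma map_cond_pathSet [IsFiniteMeasure Pr] [MeasurableSingletonClass S]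
    (h : IsMarkovModulatedExp Pr ϖ p mu Z B) (hmu : ∀ i, 0 < mu i) {n : ℕ} (f : Fin n → S)
    (hf : Pr (pathSet Z f) ≠ 0) :
    (Pr[|pathSet Z f]).map (fun ω (k : Fin n) => B ((k : ℕ) + 1) ω)
      = Measure.pi fun k => expMeasure (mu (f k)) := by
  have := fun k => isProbabilityMeasure_expMeasure (hmu (f k))
  refine map_eq_pi_of_forall_Iic (measurable_pi_lambda _ fun k => h.measurable_time _) fun x => ?_
  have hinter : pathSet Z f ∩ {ω | ∀ k : Fin n, B ((k : ℕ) + 1) ω ≤ x k}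
      = {ω | ∀ k : Fin n, Z ((k : ℕ) + 1) ω = f k ∧ B ((k : ℕ) + 1) ω ≤ x k} := by
    ext ω; simp [pathSet, forall_and]
  rw [cond_apply (h.measurableSet_pathSet f), hinter, h.measure_pathSet_inter_Iic,
    ENNReal.inv_mul_cancel_left hf (measure_ne_top _ _)]
  simp_rw [expMeasure_Iic (hmu _)]

variable [DecidableEq S] {σ : S → S}

lemma measure_pathSet_orbit (h : IsMarkovModulatedExp Pr ϖ p mu Z B)
    (hp : ∀ i j, p i j = if j = σ i then 1 else 0) (i : S) (n : ℕ) :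
    Pr (pathSet Z fun k : Fin (n + 1) => σ^[k] i) = ENNReal.ofReal (ϖ i) := by
  simp [h.measure_pathSet, hp, Function.iterate_succ_apply']

lemma pathSet_orbit_ae_eq [IsFiniteMeasure Pr] [MeasurableSingletonClass S]
    (h : IsMarkovModulatedExp Pr ϖ p mu Z B) (hp : ∀ i j, p i j = if j = σ i then 1 else 0)
    (i : S) (n : ℕ) : pathSet Z (fun k : Fin (n + 1) => σ^[k] i) =ᵐ[Pr] Z 1 ⁻¹' {i} :=
  ae_eq_of_subset_of_measure_ge (fun _ hω => hω 0)
    (by rw [h.measure_preimage_state_one, h.measure_pathSet_orbit hp])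
    (h.measurableSet_pathSet _).nullMeasurableSet (measure_ne_top _ _)

lemma integral_eq_sum_orbit [IsFiniteMeasure Pr] [Fintype S] [DiscreteMeasurableSpace S]
    (h : IsMarkovModulatedExp Pr ϖ p mu Z B) (hp : ∀ i j, p i j = if j = σ i then 1 else 0)
    (hϖ : ∀ i, 0 < ϖ i) (hmu : ∀ i, 0 < mu i) {n : ℕ} {g : (Fin (n + 1) → ℝ) → ℝ}
    (hg : Measurable g)
    (hgi : ∀ i, Integrable g (Measure.pi fun k : Fin (n + 1) => expMeasure (mu (σ^[k] i)))) :
    ∫ ω, g (fun k => B ((k : ℕ) + 1) ω) ∂Pr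
      = ∑ i, ϖ i * ∫ x, g x ∂Measure.pi fun k : Fin (n + 1) => expMeasure (mu (σ^[k] i)) := by
  set X : Ω → Fin (n + 1) → ℝ := fun ω k => B ((k : ℕ) + 1) ω
  have hX : Measurable X := measurable_pi_lambda _ fun k => h.measurable_time _
  have hlaw (i : S) :
      (Pr[|Z 1 ← i]).map X = Measure.pi fun k : Fin (n + 1) => expMeasure (mu (σ^[k] i)) := by
    rw [← cond_congr_set (h.pathSet_orbit_ae_eq hp i n)]
    refine h.map_cond_pathSet hmu _ ?_
    simpa [h.measure_pathSet_orbit hp] using hϖ i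
  have hint (i : S) : Integrable (fun ω => g (X ω)) (Pr[|Z 1 ← i]) :=
    (integrable_map_measure hg.aestronglyMeasurable hX.aemeasurable).1 (hlaw i ▸ hgi i)
  calc ∫ ω, g (X ω) ∂Pr = ∫ ω, g (X ω) ∂(∑ i, Pr (Z 1 ⁻¹' {i}) • Pr[|Z 1 ← i]) := by
        rw [sum_meas_smul_cond_fiber (h.measurable_state 1)]
    _ = ∑ i, (Pr (Z 1 ⁻¹' {i})).toReal * ∫ ω, g (X ω) ∂Pr[|Z 1 ← i] := by
        rw [integral_finsetSum_measure fun i _ => (hint i).smul_measure (measure_ne_top _ _)]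
        simp_rw [integral_smul_measure, smul_eq_mul]
    _ = _ := by
        refine Finset.sum_congr rfl fun i _ => ?_
        rw [h.measure_preimage_state_one, ENNReal.toReal_ofReal (hϖ i).le,
          ← integral_map hX.aemeasurable (hlaw i ▸ hg.aestronglyMeasurable), hlaw i]

lemma integral_prod_pow_eq_sum [IsFiniteMeasure Pr] [Fintype S] [DiscreteMeasurableSpace S]
    (h : IsMarkovModulatedExp Pr ϖ p mu Z B) (hp : ∀ i j, p i j = if j = σ i then 1 else 0)
    (hϖ : ∀ i, 0 < ϖ i) (hmu : ∀ i, 0 < mu i) {n : ℕ} (s : Finset (Fin (n + 1)))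
    (e : Fin (n + 1) → ℕ) :
    ∫ ω, ∏ k ∈ s, B ((k : ℕ) + 1) ω ^ e k ∂Pr
      = ∑ i, ϖ i * ∏ k ∈ s, (e k)! / mu (σ^[k] i) ^ e k := by
  have := fun i => isProbabilityMeasure_expMeasure (hmu i)
  rw [h.integral_eq_sum_orbit hp hϖ hmu (g := fun x => ∏ k ∈ s, x k ^ e k) (by fun_prop)
    fun i => integrable_finset_prod_pi fun k _ => integrable_pow_expMeasure (hmu _) _]
  refine Finset.sum_congr rfl fun i _ => ?_
  rw [integral_finset_prod_pi s fun k t => t ^ e k]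
  simp_rw [integral_pow_expMeasure (hmu _)]

end IsMarkovModulatedExp

end MarkovModulated

open Fin.NatCast

lemma autocorrelation_alternating_rates {u : ℝ} (hu : 0 < u) {mu : Fin 4 → ℝ}
    (hmu : mu = ![u / 2, 10 * u, u / 2, 10 * u]) (j : Fin 4) :
    ((∑ i, 4⁻¹ * ((mu i)⁻¹ * (mu (i + j))⁻¹))
        - (∑ i, 4⁻¹ * (mu i)⁻¹) * ∑ i, 4⁻¹ * (mu (i + j))⁻¹)
      / ((∑ i, 4⁻¹ * (2 / mu i ^ 2)) - (∑ i, 4⁻¹ * (mu i)⁻¹) ^ 2)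
      = (-1) ^ (j : ℕ) * (361 / 1163) := by
  subst hmu
  fin_cases j <;> simp [Fin.sum_univ_four] <;> field_simp <;> ring

/-- For the cyclic 4-state chain with transition matrix `p i j = if j = i + 1 then 1 else 0`
(stationary distribution `(1/4,1/4,1/4,1/4)`) and preparation times `B_n` that are
conditionally independent given the chain and exponential with rate `μ_{Z_n}`, where
`(μ₁,μ₂,μ₃,μ₄) = (u/2, 10u, u/2, 10u)` for `u > 0`, the autocorrelation is
`ρ[B_1, B_{1+n}] = (-1)^n · 361/1163` for every `n ≥ 1`, independently of `u`. -/
theorem stmt13 {Ω : Type*} [MeasurableSpace Ω] (Pr : Measure Ω) [IsProbabilityMeasure Pr]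
    (u : ℝ) (hu : 0 < u)
    (p : Fin 4 → Fin 4 → ℝ) (hp : ∀ i j, p i j = if j = i + 1 then 1 else 0)
    (mu : Fin 4 → ℝ) (hmu : mu = ![u / 2, 10 * u, u / 2, 10 * u])
    (Z : ℕ → Ω → Fin 4) (B : ℕ → Ω → ℝ)
    (hZ : ∀ n, Measurable (Z n)) (hB : ∀ n, Measurable (B n))
    -- Finite-dimensional distributions of the stationary chain started from `ϖ = 1/4`.
    (h_chain : ∀ (n : ℕ) (f : Fin (n + 1) → Fin 4),
      Pr {ω | ∀ k : Fin (n + 1), Z ((k : ℕ) + 1) ω = f k}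
        = ENNReal.ofReal ((1 / 4) * ∏ k : Fin n, p (f k.castSucc) (f k.succ)))
    -- Conditionally on the chain, the `B_n` are independent and `B_n ~ Exp(μ_{Z_n})`.
    (h_condB : ∀ (n : ℕ) (f : Fin n → Fin 4) (x : Fin n → ℝ),
      Pr {ω | ∀ k : Fin n, Z ((k : ℕ) + 1) ω = f k ∧ B ((k : ℕ) + 1) ω ≤ x k}
        = Pr {ω | ∀ k : Fin n, Z ((k : ℕ) + 1) ω = f k}
            * ∏ k, ENNReal.ofReal (1 - Real.exp (-(mu (f k)) * x k))) :
    ∀ n : ℕ, 1 ≤ n →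
      ((∫ ω, B 1 ω * B (1 + n) ω ∂Pr) - (∫ ω, B 1 ω ∂Pr) * (∫ ω, B (1 + n) ω ∂Pr))
          / ((∫ ω, B 1 ω ^ 2 ∂Pr) - (∫ ω, B 1 ω ∂Pr) ^ 2)
        = (-1 : ℝ) ^ n * (361 / 1163) := by
  intro n hn
  have hM : IsMarkovModulatedExp Pr (fun _ => 1 / 4) p mu Z B := ⟨hZ, hB, h_chain, h_condB⟩
  have hmu_pos : ∀ i, 0 < mu i := by
    subst hmu; intro i; fin_cases i <;> simp <;> positivity
  have horbit (k : ℕ) (i : Fin 4) : (· + 1)^[k] i = i + k := by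
    simp
  have hmoment :=
    hM.integral_prod_pow_eq_sum (σ := (· + 1)) hp (fun _ => by norm_num) hmu_pos (n := n)
  have h0 : (0 : Fin (n + 1)) ≠ Fin.last n := by simp [Fin.ext_iff]; omega
  have h_cross := hmoment {0, Fin.last n} 1
  have h_mean := hmoment {0} 1
  have h_mean_shift := hmoment {Fin.last n} 1
  have h_second := hmoment {0} 2
  simp only [Pi.ofNat_apply, pow_one, Finset.prod_pair h0, Fin.coe_ofNat_eq_mod,
    Nat.zero_mod, zero_add, Fin.val_last, one_div, Nat.factorial_one, Nat.factorial_two,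
    Nat.cast_one, Nat.cast_ofNat, horbit, Nat.cast_zero, add_zero, Finset.prod_singleton,
    Finset.prod_inv_distrib, Finset.prod_div_distrib] at h_cross h_mean h_mean_shift h_second
  have hsign : (-1 : ℝ) ^ n = (-1) ^ ((n : Fin 4) : ℕ) := by
    rw [Fin.val_natCast, neg_one_pow_eq_pow_mod_two, neg_one_pow_eq_pow_mod_two (n := n % 4),
      Nat.mod_mod_of_dvd n (by norm_num : 2 ∣ 4)]
  rw [add_comm 1 n, h_cross, h_mean, h_mean_shift, h_second, hsign]
  exact autocorrelation_alternating_rates hu hmu n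
end

section
/- Let μ > 0, let A ≥ 0 be a random variable with Laplace–Stieltjes transform α(s) = E[e^{−sA}], let B be exponentially distributed with rate μ, and let W ≥ 0 be a random variable such that W, A, B are mutually independent and max(0, B − A − W) has the same distribution as W. Then E[e^{−μW}] = 2/(2 + α(μ)), P[W = 0] = (2 − α(μ))/(2 + α(μ)), and for every Borel set S ⊆ (0,∞), P[W ∈ S] = ∫_S (2α(μ)/(2 + α(μ))) · μ e^{−μx} dx. -/
/-!
Put `V = A + W`; it is independent of `B ~ Exp(μ)`. Conditioning on `V`, for `t ≥ 0`,
`P[max(0, B - V) ≤ t] = P[B ≤ V + t] = 1 - c e^{-μt}` with `c = E[e^{-μV}] = α(μ) E[e^{-μW}]`.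
So stationarity forces the law of `W` to be an atom of mass `1 - c` at `0` plus `c` times the
`Exp(μ)` law. The Laplace transform of this mixture at `μ` is `1 - c/2`, which gives the linear
equation `E[e^{-μW}] = 1 - α(μ) E[e^{-μW}] / 2`.
-/

open MeasureTheory ProbabilityTheory Real Set
open scoped ENNReal

lemma exp_neg_mul_le_one {s x : ℝ} (hs : 0 ≤ s) (hx : 0 ≤ x) : exp (-s * x) ≤ 1 :=
  exp_le_one_iff.mpr (by nlinarith)

lemma integral_Ioc_mul_exp_neg_mul (μ : ℝ) {t : ℝ} (ht : 0 ≤ t) :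
    ∫ x in Ioc 0 t, μ * exp (-μ * x) = 1 - exp (-μ * t) := by
  have h := intervalIntegral.mul_integral_comp_mul_left (a := 0) (b := t) (f := exp) (-μ)
  rw [integral_exp, mul_zero, exp_zero] at h
  rw [← intervalIntegral.integral_of_le ht, intervalIntegral.integral_const_mul]
  linear_combination -h

lemma integrableOn_Ioi_mul_exp_neg_mul {μ : ℝ} (hμ : 0 < μ) (c : ℝ) :
    IntegrableOn (fun x => c * exp (-μ * x)) (Ioi 0) := by
  simpa only [IntegrableOn, neg_mul] using (exp_neg_integrableOn_Ioi 0 hμ).const_mul c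

lemma integral_Ioi_exp_neg_mul {μ : ℝ} (hμ : 0 < μ) : ∫ x in Ioi 0, exp (-μ * x) = μ⁻¹ := by
  rw [integral_exp_mul_Ioi (by linarith) 0]
  simp [neg_div]

section LaplaceTransform

variable {Ω : Type*} [MeasurableSpace Ω] {P : Measure Ω} {X : Ω → ℝ} {s : ℝ}

lemma integrable_exp_neg_mul_of_nonneg [IsFiniteMeasure P] (hX : AEMeasurable X P)
    (hX0 : ∀ᵐ ω ∂P, 0 ≤ X ω) (hs : 0 ≤ s) : Integrable (fun ω => exp (-s * X ω)) P := by
  refine .of_bound (by fun_prop) 1 ?_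
  filter_upwards [hX0] with ω hω
  rw [norm_of_nonneg (exp_pos _).le]
  exact exp_neg_mul_le_one hs hω

lemma integral_exp_neg_mul_le_one [IsProbabilityMeasure P] (hX : AEMeasurable X P)
    (hX0 : ∀ᵐ ω ∂P, 0 ≤ X ω) (hs : 0 ≤ s) : ∫ ω, exp (-s * X ω) ∂P ≤ 1 := by
  calc ∫ ω, exp (-s * X ω) ∂P ≤ ∫ _, (1 : ℝ) ∂P :=
        integral_mono_ae (integrable_exp_neg_mul_of_nonneg hX hX0 hs) (integrable_const 1)
          (by filter_upwards [hX0] with ω hω using exp_neg_mul_le_one hs hω)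
    _ = 1 := by simp

lemma ProbabilityTheory.IndepFun.integral_exp_neg_mul_add {Y : Ω → ℝ} (hX : Measurable X)
    (hY : Measurable Y) (h : IndepFun X Y P) (s : ℝ) :
    ∫ ω, exp (-s * (X ω + Y ω)) ∂P = (∫ ω, exp (-s * X ω) ∂P) * ∫ ω, exp (-s * Y ω) ∂P := by
  have hexp : Measurable fun x : ℝ => exp (-s * x) := by fun_prop
  simp_rw [mul_add, exp_add]
  exact (h.comp hexp hexp).integral_mul_eq_mul_integral (by fun_prop) (by fun_prop)

end LaplaceTransform

noncomputable def zeroExpMixture (μ c : ℝ) : Measure ℝ :=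
  ENNReal.ofReal (1 - c) • Measure.dirac 0 +
    (volume.restrict (Ioi 0)).withDensity fun x => ENNReal.ofReal (c * (μ * exp (-μ * x)))

namespace zeroExpMixture

variable {μ c : ℝ}

lemma apply {S : Set ℝ} (hS : MeasurableSet S) :
    zeroExpMixture μ c S = ENNReal.ofReal (1 - c) * S.indicator 1 0
      + ∫⁻ x in S ∩ Ioi 0, ENNReal.ofReal (c * (μ * exp (-μ * x))) := by
  rw [zeroExpMixture, Measure.add_apply, Measure.smul_apply, Measure.dirac_apply' _ hS,
    withDensity_apply _ hS, Measure.restrict_restrict hS, smul_eq_mul]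

lemma setLIntegral_density (hμ : 0 < μ) (hc : 0 ≤ c) {S : Set ℝ} (hS_pos : S ⊆ Ioi 0) :
    ∫⁻ x in S, ENNReal.ofReal (c * (μ * exp (-μ * x)))
      = ENNReal.ofReal (∫ x in S, c * (μ * exp (-μ * x))) := by
  rw [ofReal_integral_eq_lintegral_ofReal]
  · simpa only [IntegrableOn, mul_assoc] using
      (integrableOn_Ioi_mul_exp_neg_mul hμ (c * μ)).mono_set hS_pos
  · exact ae_of_all _ fun x => by positivity

lemma apply_of_subset_Ioi (hμ : 0 < μ) (hc : 0 ≤ c) {S : Set ℝ} (hS : MeasurableSet S)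
    (hS_pos : S ⊆ Ioi 0) :
    zeroExpMixture μ c S = ENNReal.ofReal (∫ x in S, c * (μ * exp (-μ * x))) := by
  have h0 : (0 : ℝ) ∉ S := fun h => self_notMem_Ioi (hS_pos h)
  rw [apply hS, indicator_of_notMem h0, mul_zero, zero_add, inter_eq_self_of_subset_left hS_pos,
    setLIntegral_density hμ hc hS_pos]

lemma apply_singleton_zero : zeroExpMixture μ c {0} = ENNReal.ofReal (1 - c) := by
  rw [apply (measurableSet_singleton 0),
    singleton_inter_eq_empty.mpr (self_notMem_Ioi (a := (0 : ℝ)))]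
  simp

lemma apply_Iic_of_neg {t : ℝ} (ht : t < 0) : zeroExpMixture μ c (Iic t) = 0 := by
  rw [apply measurableSet_Iic, indicator_of_notMem (notMem_Iic.mpr ht),
    Iic_inter_Ioi, Ioc_eq_empty (not_lt.mpr ht.le)]
  simp

lemma apply_Iic_of_nonneg (hμ : 0 < μ) (hc₀ : 0 ≤ c) (hc₁ : c ≤ 1) {t : ℝ} (ht : 0 ≤ t) :
    zeroExpMixture μ c (Iic t) = ENNReal.ofReal (1 - c * exp (-μ * t)) := by
  have hexp : exp (-μ * t) ≤ 1 := exp_neg_mul_le_one hμ.le ht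
  rw [apply measurableSet_Iic, indicator_of_mem (mem_Iic.mpr ht), Iic_inter_Ioi,
    setLIntegral_density hμ hc₀ Ioc_subset_Ioi_self, integral_const_mul,
    integral_Ioc_mul_exp_neg_mul μ ht, Pi.one_apply, mul_one,
    ← ENNReal.ofReal_add (by linarith) (by nlinarith)]
  ring_nf

lemma integral_exp_neg_mul (hμ : 0 < μ) (hc₀ : 0 ≤ c) (hc₁ : c ≤ 1) :
    ∫ x, exp (-μ * x) ∂zeroExpMixture μ c = 1 - c / 2 := by
  have hdens : Measurable fun x : ℝ => ENNReal.ofReal (c * (μ * exp (-μ * x))) := by fun_prop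
  have hsmul : (fun x => (ENNReal.ofReal (c * (μ * exp (-μ * x)))).toReal • exp (-μ * x))
      = fun x => c * μ * exp (-(2 * μ) * x) := by
    funext x
    rw [ENNReal.toReal_ofReal (by positivity), smul_eq_mul, mul_assoc, mul_assoc, ← exp_add]
    ring_nf
  have hint_dirac :
      Integrable (fun x => exp (-μ * x)) (ENNReal.ofReal (1 - c) • Measure.dirac 0) :=
    (integrable_dirac enorm_lt_top).smul_measure ENNReal.ofReal_ne_top
  have hint_dens : Integrable (fun x => exp (-μ * x))
      ((volume.restrict (Ioi 0)).withDensity fun x => ENNReal.ofReal (c * (μ * exp (-μ * x)))) := by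
    rw [integrable_withDensity_iff_integrable_smul' hdens
      (ae_of_all _ fun _ => ENNReal.ofReal_lt_top), hsmul]
    exact integrableOn_Ioi_mul_exp_neg_mul (by linarith) (c * μ)
  rw [zeroExpMixture, integral_add_measure hint_dirac hint_dens, integral_smul_measure,
    integral_dirac, integral_withDensity_eq_integral_toReal_smul hdens
      (ae_of_all _ fun _ => ENNReal.ofReal_lt_top), hsmul, integral_const_mul,
    integral_Ioi_exp_neg_mul (by linarith), mul_zero, exp_zero, smul_eq_mul, mul_one,
    ENNReal.toReal_ofReal (by linarith)]
  field_simp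
  ring

lemma eq_of_apply_Iic {ν : Measure ℝ} [IsFiniteMeasure ν] (hμ : 0 < μ) (hc₀ : 0 ≤ c)
    (hc₁ : c ≤ 1)
    (hν_neg : ∀ t < 0, ν (Iic t) = 0)
    (hν_nonneg : ∀ t, 0 ≤ t → ν (Iic t) = ENNReal.ofReal (1 - c * exp (-μ * t))) :
    ν = zeroExpMixture μ c :=
  Measure.ext_of_Iic _ _ fun t => (lt_or_ge t 0).elim
    (fun ht => by rw [hν_neg t ht, apply_Iic_of_neg ht])
    (fun ht => by rw [hν_nonneg t ht, apply_Iic_of_nonneg hμ hc₀ hc₁ ht])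

end zeroExpMixture

section QueueStep

variable {Ω : Type*} [MeasurableSpace Ω] {P : Measure Ω} {V B : Ω → ℝ} {μ : ℝ}

lemma ProbabilityTheory.IndepFun.measure_le_add_eq_lintegral [IsFiniteMeasure P]
    (hV : Measurable V) (hB : Measurable B) (h : IndepFun V B P) (t : ℝ) :
    P {ω | B ω ≤ V ω + t} = ∫⁻ v, P.map B (Iic (v + t)) ∂P.map V := by
  have hs : MeasurableSet {p : ℝ × ℝ | p.2 ≤ p.1 + t} :=
    measurableSet_le measurable_snd (measurable_fst.add_const t)
  calc P {ω | B ω ≤ V ω + t} = P.map (fun ω => (V ω, B ω)) {p | p.2 ≤ p.1 + t} :=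
        (Measure.map_apply (hV.prodMk hB) hs).symm
    _ = ((P.map V).prod (P.map B)) {p | p.2 ≤ p.1 + t} := by
        rw [(indepFun_iff_map_prod_eq_prod_map_map hV.aemeasurable hB.aemeasurable).mp h]
    _ = ∫⁻ v, P.map B (Iic (v + t)) ∂P.map V := Measure.prod_apply hs

lemma lintegral_ofReal_one_sub_exp_neg_mul {ν : Measure ℝ} [IsProbabilityMeasure ν]
    (hμ : 0 ≤ μ) (hν : ∀ᵐ v ∂ν, 0 ≤ v) {t : ℝ} (ht : 0 ≤ t) :
    ∫⁻ v, ENNReal.ofReal (1 - exp (-μ * (v + t))) ∂ν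
      = ENNReal.ofReal (1 - (∫ v, exp (-μ * v) ∂ν) * exp (-μ * t)) := by
  have hint : Integrable (fun v => exp (-μ * v)) ν :=
    integrable_exp_neg_mul_of_nonneg aemeasurable_id hν hμ
  have hint' : Integrable (fun v => 1 - exp (-μ * v) * exp (-μ * t)) ν :=
    (integrable_const 1).sub (hint.mul_const _)
  simp_rw [mul_add, exp_add]
  rw [← ofReal_integral_eq_lintegral_ofReal hint',
    integral_sub (integrable_const 1) (hint.mul_const _), integral_mul_const]
  · simp
  · filter_upwards [hν] with v hv
    have := mul_le_one₀ (exp_neg_mul_le_one hμ hv) (exp_pos _).le (exp_neg_mul_le_one hμ ht)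
    simp only [Pi.zero_apply, sub_nonneg, this]

lemma measure_max_zero_sub_le [IsProbabilityMeasure P] (hμ : 0 ≤ μ) (hV : Measurable V)
    (hB : Measurable B) (hV₀ : ∀ ω, 0 ≤ V ω)
    (hB_exp : ∀ x, P {ω | B ω ≤ x} = ENNReal.ofReal (1 - exp (-μ * x)))
    (h : IndepFun V B P) {t : ℝ} (ht : 0 ≤ t) :
    P {ω | max 0 (B ω - V ω) ≤ t}
      = ENNReal.ofReal (1 - (∫ ω, exp (-μ * V ω) ∂P) * exp (-μ * t)) := by
  have hset : {ω | max 0 (B ω - V ω) ≤ t} = {ω | B ω ≤ V ω + t} := by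
    ext ω
    exact (max_le_iff.trans (and_iff_right ht)).trans sub_le_iff_le_add'
  have hB_law : ∀ x, P.map B (Iic x) = ENNReal.ofReal (1 - exp (-μ * x)) := fun x => by
    rw [Measure.map_apply hB measurableSet_Iic]
    exact hB_exp x
  have hV_law : ∀ᵐ v ∂P.map V, 0 ≤ v :=
    (ae_map_iff hV.aemeasurable measurableSet_Ici).mpr (ae_of_all _ hV₀)
  have := Measure.isProbabilityMeasure_map (μ := P) hV.aemeasurable
  rw [hset, h.measure_le_add_eq_lintegral hV hB, lintegral_congr fun v => hB_law (v + t),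
    lintegral_ofReal_one_sub_exp_neg_mul hμ hV_law ht,
    integral_map hV.aemeasurable (by fun_prop)]

lemma map_eq_zeroExpMixture_of_map_max_zero_sub [IsProbabilityMeasure P] {W : Ω → ℝ}
    (hμ : 0 < μ) (hV : Measurable V) (hB : Measurable B) (hW : Measurable W)
    (hV₀ : ∀ ω, 0 ≤ V ω) (hW₀ : ∀ ω, 0 ≤ W ω)
    (hB_exp : ∀ x, P {ω | B ω ≤ x} = ENNReal.ofReal (1 - exp (-μ * x)))
    (h : IndepFun V B P) (h_law : P.map (fun ω => max 0 (B ω - V ω)) = P.map W) :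
    P.map W = zeroExpMixture μ (∫ ω, exp (-μ * V ω) ∂P) := by
  have := Measure.isProbabilityMeasure_map (μ := P) hW.aemeasurable
  refine zeroExpMixture.eq_of_apply_Iic hμ (integral_nonneg fun _ => (exp_pos _).le)
    (integral_exp_neg_mul_le_one hV.aemeasurable (ae_of_all _ hV₀) hμ.le) (fun t ht => ?_)
    (fun t ht => ?_)
  · rw [Measure.map_apply hW measurableSet_Iic,
      eq_empty_of_forall_notMem (s := W ⁻¹' Iic t) fun ω hω => (ht.trans_le (hW₀ ω)).not_ge hω,
      measure_empty]
  · rw [← h_law, Measure.map_apply (by fun_prop) measurableSet_Iic]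
    exact measure_max_zero_sub_le hμ.le hV hB hV₀ hB_exp h ht

end QueueStep

/-- The i.i.d. alternating service queue with exponential preparation times: if `A ≥ 0` has
Laplace–Stieltjes transform `α`, `B ~ Exp(μ)`, `W ≥ 0`, the three are mutually independent,
and `max (0, B - A - W)` has the same law as `W`, then `E[e^{-μW}] = 2/(2 + α(μ))`,
`P[W = 0] = (2 - α(μ))/(2 + α(μ))`, and on `(0,∞)` the law of `W` has density
`x ↦ (2α(μ)/(2 + α(μ))) μ e^{-μx}`. -/
theorem stmt15 {Ω : Type*} [MeasurableSpace Ω] (Pr : Measure Ω) [IsProbabilityMeasure Pr]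
    (μ : ℝ) (hμ : 0 < μ)
    (A B W : Ω → ℝ) (hA : Measurable A) (hB : Measurable B) (hW : Measurable W)
    (hA_nonneg : ∀ ω, 0 ≤ A ω) (hW_nonneg : ∀ ω, 0 ≤ W ω)
    (hB_exp : ∀ x : ℝ, Pr {ω | B ω ≤ x} = ENNReal.ofReal (1 - Real.exp (-μ * x)))
    (h_indep : iIndepFun ![W, A, B] Pr)
    (h_stat : Measure.map (fun ω => max 0 (B ω - A ω - W ω)) Pr = Measure.map W Pr)
    (α : ℝ → ℝ) (hα : ∀ s : ℝ, α s = ∫ ω, Real.exp (-s * A ω) ∂Pr) :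
    (∫ ω, Real.exp (-μ * W ω) ∂Pr) = 2 / (2 + α μ)
      ∧ Pr {ω | W ω = 0} = ENNReal.ofReal ((2 - α μ) / (2 + α μ))
      ∧ ∀ S : Set ℝ, MeasurableSet S → S ⊆ Set.Ioi 0 →
          Pr {ω | W ω ∈ S}
            = ENNReal.ofReal (∫ x in S, (2 * α μ / (2 + α μ)) * (μ * Real.exp (-μ * x))) := by
  have hV₀ : ∀ ω, 0 ≤ A ω + W ω := fun ω => add_nonneg (hA_nonneg ω) (hW_nonneg ω)
  have hVB : IndepFun (fun ω => A ω + W ω) B Pr :=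
    (h_indep.indepFun_prodMk (fun i => by fin_cases i <;> assumption) 1 0 2 (by decide)
      (by decide)).comp (measurable_fst.add measurable_snd) measurable_id
  set β := ∫ ω, exp (-μ * W ω) ∂Pr
  set c := ∫ ω, exp (-μ * (A ω + W ω)) ∂Pr
  have hc₀ : 0 ≤ c := integral_nonneg fun _ => (exp_pos _).le
  have hc₁ : c ≤ 1 :=
    integral_exp_neg_mul_le_one (hA.add hW).aemeasurable (ae_of_all _ hV₀) hμ.le
  have hlaw : Pr.map W = zeroExpMixture μ c :=
    map_eq_zeroExpMixture_of_map_max_zero_sub hμ (hA.add hW) hB hW hV₀ hW_nonneg hB_exp hVB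
      (by simpa only [sub_sub] using h_stat)
  have hc : c = α μ * β := by
    rw [hα μ]
    exact (h_indep.indepFun (show (1 : Fin 3) ≠ 0 by decide)).integral_exp_neg_mul_add hA hW μ
  have hβ : β = 1 - c / 2 := by
    rw [← zeroExpMixture.integral_exp_neg_mul hμ hc₀ hc₁, ← hlaw,
      integral_map hW.aemeasurable (by fun_prop)]
  have hα₀ : 0 ≤ α μ := hα μ ▸ integral_nonneg fun _ => (exp_pos _).le
  have hβ_val : β = 2 / (2 + α μ) := by
    rw [eq_div_iff (by linarith)]
    linear_combination 2 * hβ - hc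
  have hc_val : c = 2 * α μ / (2 + α μ) := by
    rw [hc, hβ_val]
    ring
  refine ⟨hβ_val, ?_, fun S hS hS_pos => ?_⟩
  · change Pr (W ⁻¹' {0}) = _
    rw [← Measure.map_apply hW (measurableSet_singleton 0), hlaw,
      zeroExpMixture.apply_singleton_zero, hc_val]
    congr 1
    field_simp
    ring
  · change Pr (W ⁻¹' S) = _
    rw [← Measure.map_apply hW hS, hlaw, zeroExpMixture.apply_of_subset_Ioi hμ hc₀ hS hS_pos,
      hc_val]
end
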